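/- Assume in addition that every S(t) is self-adjoint. Then the system is null-controllable in time T, i.e. Ran S(T) ⊆ Ran 𝓑^T, if and only if there exists a constant C > 0 such that the final-state-observability inequality ‖S(T)v‖²_H ≤ C² ∫₀^T ‖B* S(t) v‖²_U dt holds for all v ∈ H. -/

import Mathlib

/-!
The equivalence is an instance of Douglas' range-inclusion criterion: for bounded operators `A`, `G`
between Hilbert spaces with a common codomain, `range A ⊆ range G` iff
`‖A† v‖ ≤ C ‖G† v‖` for some `C`. The forward half is the open mapping theorem applied to the
projection `{(f, x) | G f = A x} → E'`; the converse is Hahn–Banach and Riesz applied to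
`G† v ↦ ⟪A y, v⟫`, which is well defined and bounded by the hypothesis.

Take `A = S(T)`, which is its own adjoint, and `G = 𝓑^T`. Because every `S(t)` is self-adjoint,
`(𝓑^T)† v` is the function `s ↦ B† S(T - s) v` in `L²(0, T; U)`, so after the substitution
`t = T - s` its squared norm is the observability integral. The integrals make sense because
a strongly continuous family is uniformly bounded on `[0, T]` (Banach–Steinhaus), hence jointly
continuous in time and state.
-/

open MeasureTheory Set Filter
open scoped InnerProductSpace Topology ENNReal

open ContinuousLinearMap

section Douglas

variable {𝕜 E E' F : Type*} [RCLike 𝕜]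
  [NormedAddCommGroup E] [InnerProductSpace 𝕜 E] [CompleteSpace E]
  [NormedAddCommGroup E'] [InnerProductSpace 𝕜 E'] [CompleteSpace E']
  [NormedAddCommGroup F] [InnerProductSpace 𝕜 F] [CompleteSpace F]

theorem range_subset_range_of_norm_adjoint_le (A : E' →L[𝕜] E) (G : F →L[𝕜] E) (C : ℝ)
    (h : ∀ v, ‖adjoint A v‖ ≤ C * ‖adjoint G v‖) : range A ⊆ range G := by
  rintro _ ⟨y, rfl⟩
  let G' : E →ₗ[𝕜] F := adjoint G
  have hker : LinearMap.ker G' ≤ LinearMap.ker (innerSL 𝕜 (A y) : E →ₗ[𝕜] 𝕜) := by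
    intro v hv
    have hv' : adjoint G v = 0 := hv
    have hAv : adjoint A v = 0 := norm_le_zero_iff.mp (by simpa [hv'] using h v)
    simp [← adjoint_inner_right, hAv]
  let φ : LinearMap.range G' →ₗ[𝕜] 𝕜 :=
    (LinearMap.ker G').liftQ _ hker ∘ₗ G'.quotKerEquivRange.symm.toLinearMap
  have hφ : ∀ v, φ ⟨G' v, LinearMap.mem_range_self G' v⟩ = ⟪A y, v⟫_𝕜 := by
    intro v
    simp [φ, LinearMap.quotKerEquivRange_symm_apply_image]
  have hbound : ∀ w, ‖φ w‖ ≤ C * ‖y‖ * ‖w‖ := by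
    rintro ⟨_, v, rfl⟩
    rw [hφ]
    calc ‖⟪A y, v⟫_𝕜‖ = ‖⟪y, adjoint A v⟫_𝕜‖ := by rw [adjoint_inner_right]
     _ ≤ ‖y‖ * ‖adjoint A v‖ := norm_inner_le_norm _ _
     _ ≤ ‖y‖ * (C * ‖adjoint G v‖) := by gcongr; exact h v
     _ = C * ‖y‖ * ‖adjoint G v‖ := by ring
  obtain ⟨g, hg, -⟩ := exists_extension_norm_eq _ (φ.mkContinuous _ hbound)
  refine ⟨(InnerProductSpace.toDual 𝕜 F).symm g, ext_inner_right 𝕜 fun v => ?_⟩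
  rw [← adjoint_inner_right, InnerProductSpace.toDual_symm_apply]
  exact (hg ⟨_, LinearMap.mem_range_self G' v⟩).trans (hφ v)

theorem exists_norm_adjoint_le_of_range_subset_range (A : E' →L[𝕜] E) (G : F →L[𝕜] E)
    (h : range A ⊆ range G) : ∃ C, 0 < C ∧ ∀ v, ‖adjoint A v‖ ≤ C * ‖adjoint G v‖ := by
  let W := LinearMap.ker (G.coprod (-A) : F × E' →ₗ[𝕜] E)
  have : CompleteSpace W := (isClosed_ker _).completeSpace_coe
  let π : W →L[𝕜] E' := (snd 𝕜 F E').comp W.subtypeL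
  have hπ : Function.Surjective π := by
    intro x
    obtain ⟨f, hf⟩ := h (mem_range_self x)
    exact ⟨⟨(f, x), by simp [W, hf]⟩, rfl⟩
  obtain ⟨C, hC, hπC⟩ := π.exists_preimage_norm_le hπ
  refine ⟨C, hC, fun v => ?_⟩
  obtain ⟨⟨⟨f, x⟩, hfx⟩, hx, hnorm⟩ := hπC (adjoint A v)
  obtain rfl : x = adjoint A v := hx
  have hGf : G f = A (adjoint A v) := by simpa [W, add_neg_eq_zero] using hfx
  have hsq : ‖adjoint A v‖ * ‖adjoint A v‖ ≤ ‖adjoint A v‖ * (C * ‖adjoint G v‖) :=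
    calc ‖adjoint A v‖ * ‖adjoint A v‖ = RCLike.re ⟪f, adjoint G v⟫_𝕜 := by
          rw [adjoint_inner_right, hGf, ← adjoint_inner_right, inner_self_eq_norm_mul_norm]
      _ ≤ ‖f‖ * ‖adjoint G v‖ := (RCLike.re_le_norm _).trans (norm_inner_le_norm _ _)
      _ ≤ C * ‖adjoint A v‖ * ‖adjoint G v‖ := by
          gcongr
          exact (norm_fst_le (f, adjoint A v)).trans hnorm
      _ = ‖adjoint A v‖ * (C * ‖adjoint G v‖) := by ring
  rcases (norm_nonneg (adjoint A v)).eq_or_lt with h0 | hpos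
  · rw [← h0]; positivity
  · exact le_of_mul_le_mul_left hsq hpos

theorem range_subset_range_iff_exists_norm_adjoint_le (A : E' →L[𝕜] E) (G : F →L[𝕜] E) :
    range A ⊆ range G ↔ ∃ C, 0 < C ∧ ∀ v, ‖adjoint A v‖ ≤ C * ‖adjoint G v‖ :=
  ⟨exists_norm_adjoint_le_of_range_subset_range A G,
    fun ⟨C, _, hC⟩ => range_subset_range_of_norm_adjoint_le A G C hC⟩

end Douglas

section StronglyContinuous

variable {X 𝕜 E F : Type*} [TopologicalSpace X] [NontriviallyNormedField 𝕜]
  [NormedAddCommGroup E] [NormedSpace 𝕜 E] [CompleteSpace E]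
  [NormedAddCommGroup F] [NormedSpace 𝕜 F]

theorem IsCompact.exists_norm_le_of_continuousOn_apply {K : Set X} (hK : IsCompact K)
    {S : X → E →L[𝕜] F} (hS : ∀ x, ContinuousOn (fun t => S t x) K) :
    ∃ C, ∀ t ∈ K, ‖S t‖ ≤ C := by
  obtain ⟨C, hC⟩ := banach_steinhaus (g := fun t : K => S t) fun x =>
    (hK.exists_bound_of_continuousOn (hS x)).imp fun _ hC t => hC t t.2
  exact ⟨C, fun t ht => hC ⟨t, ht⟩⟩

theorem IsCompact.continuousOn_uncurry_of_continuousOn_apply {K : Set X} (hK : IsCompact K)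
    {S : X → E →L[𝕜] F} (hS : ∀ x, ContinuousOn (fun t => S t x) K) :
    ContinuousOn (fun p : X × E => S p.1 p.2) (K ×ˢ univ) := by
  obtain ⟨C, hC⟩ := hK.exists_norm_le_of_continuousOn_apply hS
  refine continuousOn_prod_of_continuousOn_lipschitzOnWith' _ C.toNNReal
    (fun t ht => ((S t).lipschitz.weaken ?_).lipschitzOnWith) (fun x _ => hS x)
  rw [← NNReal.coe_le_coe, coe_nnnorm, Real.coe_toNNReal']
  exact (hC t ht).trans (le_max_left _ _)

theorem integrable_apply_of_continuousOn_apply {a b : ℝ} (hab : a ≤ b) {S : ℝ → E →L[𝕜] F}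
    (hS : ∀ x, ContinuousOn (fun t => S t x) (Icc a b)) {g : ℝ → E}
    (hg : Integrable g (volume.restrict (Ioo a b))) :
    Integrable (fun s => S s (g s)) (volume.restrict (Ioo a b)) := by
  obtain ⟨C, hC⟩ := isCompact_Icc.exists_norm_le_of_continuousOn_apply hS
  -- clamping time to `[a, b]` turns the integrand into a continuous function of `(s, g s)`
  have hclamp : Continuous (fun p : ℝ × E => S (projIcc a b hab p.1) p.2) :=
    (isCompact_Icc.continuousOn_uncurry_of_continuousOn_apply hS).comp_continuous
      (((continuous_subtype_val.comp (continuous_projIcc (h := hab))).comp continuous_fst).prodMk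
        continuous_snd) fun p => ⟨Subtype.prop _, mem_univ _⟩
  have hmem : ∀ᵐ s ∂volume.restrict (Ioo a b), s ∈ Ioo a b := ae_restrict_mem measurableSet_Ioo
  have hae : (fun s => S (projIcc a b hab s) (g s)) =ᵐ[volume.restrict (Ioo a b)]
      fun s => S s (g s) := by
    filter_upwards [hmem] with s hs
    rw [projIcc_of_mem hab (Ioo_subset_Icc_self hs)]
  refine (hg.norm.const_mul C).mono'
    ((hclamp.comp_aestronglyMeasurable (aestronglyMeasurable_id.prodMk hg.1)).congr hae) ?_
  filter_upwards [hmem] with s hs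
  exact (le_opNorm _ _).trans
    (mul_le_mul_of_nonneg_right (hC s (Ioo_subset_Icc_self hs)) (norm_nonneg _))

end StronglyContinuous

theorem setIntegral_Ioo_comp_sub_left {E : Type*} [NormedAddCommGroup E] [NormedSpace ℝ E]
    (f : ℝ → E) {T : ℝ} (hT : 0 ≤ T) : ∫ s in Ioo 0 T, f (T - s) = ∫ t in Ioo 0 T, f t := by
  simp only [← integral_Ioc_eq_integral_Ioo, ← intervalIntegral.integral_of_le hT,
    intervalIntegral.integral_comp_sub_left, sub_self, sub_zero]

section L2

variable {α 𝕜 E H : Type*} [MeasurableSpace α] {μ : Measure α} [RCLike 𝕜]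
  [NormedAddCommGroup E] [InnerProductSpace 𝕜 E] [CompleteSpace E]
  [NormedAddCommGroup H] [InnerProductSpace 𝕜 H] [CompleteSpace H]

theorem adjoint_apply_eq_toLp (L : Lp E 2 μ →L[𝕜] H) (v : H) {g : α → E} (hg : MemLp g 2 μ)
    (h : ∀ f : Lp E 2 μ, ⟪v, L f⟫_𝕜 = ∫ s, ⟪g s, f s⟫_𝕜 ∂μ) :
    adjoint L v = hg.toLp g := by
  refine ext_inner_right 𝕜 fun f => ?_
  rw [adjoint_inner_left, h, L2.inner_def]
  exact integral_congr_ae (hg.coeFn_toLp.mono fun s hs => by simp only [hs])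

theorem norm_adjoint_apply_sq_eq_integral (L : Lp E 2 μ →L[𝕜] H) (v : H) {g : α → E}
    (hg : MemLp g 2 μ) (h : ∀ f : Lp E 2 μ, ⟪v, L f⟫_𝕜 = ∫ s, ⟪g s, f s⟫_𝕜 ∂μ) :
    ‖adjoint L v‖ ^ 2 = ∫ s, ‖g s‖ ^ 2 ∂μ := by
  rw [adjoint_apply_eq_toLp L v hg h, ← inner_self_eq_norm_sq (𝕜 := 𝕜), L2.inner_def,
    ← integral_re (L2.integrable_inner _ _)]
  exact integral_congr_ae (hg.coeFn_toLp.mono fun s hs => by simp only [hs, inner_self_eq_norm_sq])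

end L2

theorem ContinuousOn.memLp_restrict_Ioo {E : Type*} [NormedAddCommGroup E] {a b : ℝ} {g : ℝ → E}
    (hg : ContinuousOn g (Icc a b)) (p : ℝ≥0∞) : MemLp g p (volume.restrict (Ioo a b)) := by
  obtain ⟨C, hC⟩ := isCompact_Icc.exists_bound_of_continuousOn hg
  exact .of_bound ((hg.mono Ioo_subset_Icc_self).aestronglyMeasurable measurableSet_Ioo) C
    ((ae_restrict_mem measurableSet_Ioo).mono fun s hs => hC s (Ioo_subset_Icc_self hs))

section Controllability

variable {H U : Type*}
  [NormedAddCommGroup H] [InnerProductSpace ℂ H] [CompleteSpace H]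
  [NormedAddCommGroup U] [InnerProductSpace ℂ U] [CompleteSpace U]

theorem norm_adjoint_controllabilityMap_apply_sq {T : ℝ} (hT : 0 ≤ T) {S : ℝ → H →L[ℂ] H}
    (hS : ∀ x, ContinuousOn (fun t => S t x) (Icc 0 T))
    (hSsa : ∀ t ∈ Icc 0 T, IsSelfAdjoint (S t)) (B : U →L[ℂ] H)
    (𝓑 : Lp U 2 (volume.restrict (Ioo 0 T)) →L[ℂ] H)
    (h𝓑 : ∀ f, 𝓑 f = ∫ s in Ioo 0 T, S (T - s) (B (f s))) (v : H) :
    ‖adjoint 𝓑 v‖ ^ 2 = ∫ t in Ioo 0 T, ‖adjoint B (S t v)‖ ^ 2 := by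
  have hreflect : MapsTo (fun s => T - s) (Icc 0 T) (Icc 0 T) :=
    fun s hs => ⟨by linarith [hs.2], by linarith [hs.1]⟩
  have hS' : ∀ x, ContinuousOn (fun s => S (T - s) x) (Icc 0 T) :=
    fun x => (hS x).comp (continuousOn_const.sub continuousOn_id) hreflect
  rw [← setIntegral_Ioo_comp_sub_left (fun t => ‖adjoint B (S t v)‖ ^ 2) hT]
  refine norm_adjoint_apply_sq_eq_integral 𝓑 v
    (((adjoint B).continuous.comp_continuousOn (hS' v)).memLp_restrict_Ioo 2) fun f => ?_
  have hint : Integrable (fun s => S (T - s) (B (f s))) (volume.restrict (Ioo 0 T)) :=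
    integrable_apply_of_continuousOn_apply hT hS'
      (B.integrable_comp ((Lp.memLp f).integrable one_le_two))
  rw [h𝓑, ← integral_inner hint]
  refine integral_congr_ae ((ae_restrict_mem measurableSet_Ioo).mono fun s hs => ?_)
  show ⟪v, S (T - s) (B (f s))⟫_ℂ = ⟪adjoint B (S (T - s) v), f s⟫_ℂ
  rw [adjoint_inner_left, ← adjoint_inner_left (S (T - s)),
    (hSsa _ (hreflect (Ioo_subset_Icc_self hs))).adjoint_eq]

end Controllability

theorem null_controllable_iff_final_state_observability_general
    {H U : Type*}
    [NormedAddCommGroup H] [InnerProductSpace ℂ H] [CompleteSpace H]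
    [NormedAddCommGroup U] [InnerProductSpace ℂ U] [CompleteSpace U]
    (T : ℝ) (hT : 0 < T)
    (S : ℝ → H →L[ℂ] H)
    (hScont : ∀ x : H, ContinuousOn (fun t => S t x) (Ici (0:ℝ)))
    (B : U →L[ℂ] H)
    (𝓑T : Lp U 2 (volume.restrict (Ioo (0:ℝ) T)) →L[ℂ] H)
    (h𝓑T : ∀ f : Lp U 2 (volume.restrict (Ioo (0:ℝ) T)),
      𝓑T f = ∫ s in Ioo (0:ℝ) T, S (T - s) (B (f s)))
    (hSsa : ∀ t : ℝ, 0 ≤ t → IsSelfAdjoint (S t)) :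
    Set.range (S T) ⊆ Set.range 𝓑T ↔
      ∃ C : ℝ, 0 < C ∧ ∀ v : H,
        ‖S T v‖ ^ 2 ≤ C ^ 2 * ∫ t in Ioo (0:ℝ) T,
          ‖ContinuousLinearMap.adjoint B (S t v)‖ ^ 2 := by
  have hobs : ∀ v, ‖adjoint 𝓑T v‖ ^ 2 = ∫ t in Ioo (0:ℝ) T, ‖adjoint B (S t v)‖ ^ 2 :=
    norm_adjoint_controllabilityMap_apply_sq hT.le (fun x => (hScont x).mono Icc_subset_Ici_self)
      (fun t ht => hSsa t ht.1) B 𝓑T h𝓑T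
  rw [range_subset_range_iff_exists_norm_adjoint_le, (hSsa T hT.le).adjoint_eq]
  refine exists_congr fun C => and_congr_right fun hC => forall_congr' fun v => ?_
  rw [← hobs, ← mul_pow, pow_le_pow_iff_left₀ (norm_nonneg _) (by positivity) two_ne_zero]

theorem null_controllable_iff_final_state_observability
    {H U : Type*}
    [NormedAddCommGroup H] [InnerProductSpace ℂ H] [CompleteSpace H]
    [NormedAddCommGroup U] [InnerProductSpace ℂ U] [CompleteSpace U]
    (a T : ℝ) (hT : 0 < T)
    (S : ℝ → H →L[ℂ] H)
    (hS0 : S 0 = 1)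
    (hSsemi : ∀ t s : ℝ, 0 ≤ t → 0 ≤ s → S (t + s) = (S t).comp (S s))
    (hScont : ∀ x : H, ContinuousOn (fun t => S t x) (Ici (0:ℝ)))
    (hSbound : ∀ t : ℝ, 0 ≤ t → ‖S t‖ ≤ Real.exp (-(t * a)))
    (B : U →L[ℂ] H)
    (𝓑T : Lp U 2 (volume.restrict (Ioo (0:ℝ) T)) →L[ℂ] H)
    (h𝓑T : ∀ f : Lp U 2 (volume.restrict (Ioo (0:ℝ) T)),
      𝓑T f = ∫ s in Ioo (0:ℝ) T, S (T - s) (B (f s)))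
    (hSsa : ∀ t : ℝ, 0 ≤ t → IsSelfAdjoint (S t)) :
    Set.range (S T) ⊆ Set.range 𝓑T ↔
      ∃ C : ℝ, 0 < C ∧ ∀ v : H,
        ‖S T v‖ ^ 2 ≤ C ^ 2 * ∫ t in Ioo (0:ℝ) T,
          ‖ContinuousLinearMap.adjoint B (S t v)‖ ^ 2 :=
  null_controllable_iff_final_state_observability_general T hT S hScont B 𝓑T h𝓑T hSsa
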